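/- Let A(x) = (a_{ij}(x)) be a symmetric n×n matrix with C^∞ entries, positive semidefinite at every point and with Σᵢ a_{ii}(x) > 0 for every x ∈ ℝⁿ, and let L u = Σ_{i,j} ∂_i(a_{ij} ∂_j u). Let Γ be smooth on {x ≠ y} and satisfy hypotheses (i)–(iv); fix α > −1 and assume Q_r(x) > 0 for all x, r > 0. Assume the representation formula: for every u ∈ C²(ℝⁿ, ℝ), every x ∈ ℝⁿ and every r > 0, u(x) = M_r(u)(x) − N_r(Lu)(x). Then for every u ∈ C²(ℝⁿ, ℝ) and every x ∈ ℝⁿ, the limit as r → 0⁺ of (M_r(u)(x) − u(x))/Q_r(x) exists and equals Lu(x). -/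

import Mathlib

open MeasureTheory Filter Topology Metric

/-- The `L`-ball `Ω_r(x) := {y ≠ x : Γ(x,y) > 1/r} ∪ {x}`. -/
def LBall {n : ℕ} (Γ : EuclideanSpace ℝ (Fin n) → EuclideanSpace ℝ (Fin n) → ℝ)
    (x : EuclideanSpace ℝ (Fin n)) (r : ℝ) : Set (EuclideanSpace ℝ (Fin n)) :=
  {y | y ≠ x ∧ 1 / r < Γ x y} ∪ {x}

/-- The partial derivative `∂_i g` in the `i`-th coordinate direction. -/
noncomputable def pd {n : ℕ} (i : Fin n) (g : EuclideanSpace ℝ (Fin n) → ℝ)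
    (x : EuclideanSpace ℝ (Fin n)) : ℝ :=
  fderiv ℝ g x (EuclideanSpace.single i 1)

/-- The divergence-form operator `L u = Σ_{i,j} ∂_i (a_{ij} ∂_j u)`. -/
noncomputable def Lop {n : ℕ} (A : EuclideanSpace ℝ (Fin n) → Matrix (Fin n) (Fin n) ℝ)
    (u : EuclideanSpace ℝ (Fin n) → ℝ) (x : EuclideanSpace ℝ (Fin n)) : ℝ :=
  ∑ i : Fin n, ∑ j : Fin n, pd i (fun z => A z i j * pd j u z) x

/-- The kernel `K(x,y) = ⟨A(y)∇_yΓ(x,y), ∇_yΓ(x,y)⟩ / Γ(x,y)^{α+2}`. -/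
noncomputable def Kker {n : ℕ} (Γ : EuclideanSpace ℝ (Fin n) → EuclideanSpace ℝ (Fin n) → ℝ)
    (A : EuclideanSpace ℝ (Fin n) → Matrix (Fin n) (Fin n) ℝ) (α : ℝ)
    (x y : EuclideanSpace ℝ (Fin n)) : ℝ :=
  (∑ i : Fin n, ∑ j : Fin n, A y i j * pd i (fun z => Γ x z) y * pd j (fun z => Γ x z) y)
    / Γ x y ^ (α + 2)

/-- `M_r(u)(x) := ((α+1)/r^{α+1}) ∫_{Ω_r(x)} u(y) K(x,y) dy`. -/
noncomputable def Mr {n : ℕ} (Γ : EuclideanSpace ℝ (Fin n) → EuclideanSpace ℝ (Fin n) → ℝ)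
    (A : EuclideanSpace ℝ (Fin n) → Matrix (Fin n) (Fin n) ℝ) (α : ℝ)
    (u : EuclideanSpace ℝ (Fin n) → ℝ) (x : EuclideanSpace ℝ (Fin n)) (r : ℝ) : ℝ :=
  ((α + 1) / r ^ (α + 1)) * ∫ y in LBall Γ x r, u y * Kker Γ A α x y

/-- `N_r(w)(x) := ((α+1)/r^{α+1}) ∫₀^r ρ^α (∫_{Ω_ρ(x)} (Γ(x,y) − 1/ρ) w(y) dy) dρ`. -/
noncomputable def Nr {n : ℕ} (Γ : EuclideanSpace ℝ (Fin n) → EuclideanSpace ℝ (Fin n) → ℝ)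
    (α : ℝ) (w : EuclideanSpace ℝ (Fin n) → ℝ) (x : EuclideanSpace ℝ (Fin n)) (r : ℝ) : ℝ :=
  ((α + 1) / r ^ (α + 1)) *
    ∫ ρ in (0 : ℝ)..r, ρ ^ α * ∫ y in LBall Γ x ρ, (Γ x y - 1 / ρ) * w y

/-- `Q_r(x) := N_r(1)(x)`. -/
noncomputable def Qr {n : ℕ} (Γ : EuclideanSpace ℝ (Fin n) → EuclideanSpace ℝ (Fin n) → ℝ)
    (α : ℝ) (x : EuclideanSpace ℝ (Fin n)) (r : ℝ) : ℝ :=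
  Nr Γ α (fun _ => 1) x r

/-- The potential `u_g(x) := ∫_{ℝⁿ} Γ(x,y) g(y) dy`. -/
noncomputable def potential {n : ℕ}
    (Γ : EuclideanSpace ℝ (Fin n) → EuclideanSpace ℝ (Fin n) → ℝ)
    (g : EuclideanSpace ℝ (Fin n) → ℝ) (x : EuclideanSpace ℝ (Fin n)) : ℝ :=
  ∫ y, Γ x y * g y

section Aux

lemma lop_continuous {n : ℕ} (A : EuclideanSpace ℝ (Fin n) → Matrix (Fin n) (Fin n) ℝ)
    (hAsmooth : ∀ i j, ContDiff ℝ (⊤ : ℕ∞) fun x => A x i j)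
    (u : EuclideanSpace ℝ (Fin n) → ℝ) (hu : ContDiff ℝ 2 u) :
    Continuous (Lop A u) := by
  apply continuous_finset_sum _ fun i _ => ?_
  apply continuous_finset_sum _ fun j _ => ?_
  have h1 : ContDiff ℝ 1 (fun z => A z i j * pd j u z) :=
    ((hAsmooth i j).of_le (by simp)).mul
      ((hu.fderiv_right (by norm_num)).clm_apply contDiff_const)
  exact (h1.continuous_fderiv (by norm_num)).clm_apply continuous_const

lemma gamma_contOn {n : ℕ}
    (Γ : EuclideanSpace ℝ (Fin n) → EuclideanSpace ℝ (Fin n) → ℝ)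
    (hΓsmooth : ContDiffOn ℝ (⊤ : ℕ∞)
      (fun p : EuclideanSpace ℝ (Fin n) × EuclideanSpace ℝ (Fin n) => Γ p.1 p.2)
      {p | p.1 ≠ p.2})
    (x : EuclideanSpace ℝ (Fin n)) :
    ContinuousOn (Γ x) {y | y ≠ x} :=
  (hΓsmooth.continuousOn).comp
    (f := fun y : EuclideanSpace ℝ (Fin n) => ((x, y) :
      EuclideanSpace ℝ (Fin n) × EuclideanSpace ℝ (Fin n)))
    (continuous_const.prodMk continuous_id).continuousOn
    (fun y hy => by simpa using (Ne.symm hy))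

lemma gamma_bound {n : ℕ}
    (Γ : EuclideanSpace ℝ (Fin n) → EuclideanSpace ℝ (Fin n) → ℝ)
    (hΓsmooth : ContDiffOn ℝ (⊤ : ℕ∞)
      (fun p : EuclideanSpace ℝ (Fin n) × EuclideanSpace ℝ (Fin n) => Γ p.1 p.2)
      {p | p.1 ≠ p.2})
    (hsymm : ∀ x y, x ≠ y → Γ x y = Γ y x)
    (hdecay : ∀ K : Set (EuclideanSpace ℝ (Fin n)), IsCompact K →
      Tendsto (fun x => ⨆ y : K, Γ x (y : EuclideanSpace ℝ (Fin n)))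
        (Filter.cocompact _) (𝓝 0))
    (x : EuclideanSpace ℝ (Fin n)) (δ : ℝ) (hδ : 0 < δ) :
    ∃ M : ℝ, ∀ y, y ∉ ball x δ → Γ x y ≤ M := by
  have hcont : ContinuousOn (Γ x) {y | y ≠ x} := gamma_contOn Γ hΓsmooth x
  have h1 : ∀ᶠ z in Filter.cocompact (EuclideanSpace ℝ (Fin n)),
      (⨆ y : ({x} : Set (EuclideanSpace ℝ (Fin n))), Γ z y) < 1 :=
    (hdecay {x} isCompact_singleton).eventually (gt_mem_nhds one_pos)
  rw [Filter.eventually_iff, Filter.mem_cocompact] at h1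
  obtain ⟨t, ht, hts⟩ := h1
  obtain ⟨R, hR⟩ := ht.isBounded.subset_closedBall x
  set S : Set (EuclideanSpace ℝ (Fin n)) := closedBall x R \ ball x δ with hS
  have hScomp : IsCompact S := (isCompact_closedBall x R).diff isOpen_ball
  have hSsub : S ⊆ {y | y ≠ x} := by
    intro y hy
    have h2 : δ ≤ dist y x := by
      by_contra h
      exact hy.2 (mem_ball.2 (lt_of_not_ge h))
    intro hxy
    rw [hxy] at h2
    simp at h2
    linarith
  obtain ⟨C, hC⟩ := hScomp.exists_bound_of_continuousOn (hcont.mono hSsub)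
  refine ⟨max C 1, fun y hy => ?_⟩
  have hyx : y ≠ x := by
    intro h
    apply hy
    rw [h]
    exact mem_ball_self hδ
  by_cases hyR : y ∈ closedBall x R
  · have h3 := hC y ⟨hyR, hy⟩
    calc Γ x y ≤ |Γ x y| := le_abs_self _
    _ ≤ C := h3
    _ ≤ max C 1 := le_max_left _ _
  · have hyt : y ∉ t := fun h => hyR (hR h)
    have h2 := hts hyt
    have h3 : (⨆ z : ({x} : Set (EuclideanSpace ℝ (Fin n))), Γ y z) = Γ y x := ciSup_unique
    rw [Set.mem_setOf_eq, h3] at h2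
    rw [hsymm x y (Ne.symm hyx)]
    exact le_trans h2.le (le_max_right _ _)

end Aux


/-- under the structural hypotheses on `A` and `Γ` (hypotheses (i)-(iv)),
with `α > −1`, `Q_r(x) > 0`, and the representation formula
`u(x) = M_r(u)(x) − N_r(Lu)(x)` for `C²` functions, one has for every `u ∈ C²(ℝⁿ,ℝ)`
and every `x` that `(M_r(u)(x) − u(x))/Q_r(x) → Lu(x)` as `r → 0⁺`. -/
theorem asymptotic_average_eq_Lop {n : ℕ}
    (A : EuclideanSpace ℝ (Fin n) → Matrix (Fin n) (Fin n) ℝ)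
    (hAsymm : ∀ x, (A x).IsSymm)
    (hAsmooth : ∀ i j, ContDiff ℝ (⊤ : ℕ∞) fun x => A x i j)
    (hApsd : ∀ x, (A x).PosSemidef)
    (hAtrace : ∀ x, 0 < ∑ i : Fin n, A x i i)
    (Γ : EuclideanSpace ℝ (Fin n) → EuclideanSpace ℝ (Fin n) → ℝ)
    (hΓsmooth : ContDiffOn ℝ (⊤ : ℕ∞)
      (fun p : EuclideanSpace ℝ (Fin n) × EuclideanSpace ℝ (Fin n) => Γ p.1 p.2)
      {p | p.1 ≠ p.2})
    (hsymm : ∀ x y, x ≠ y → Γ x y = Γ y x)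
    (hpos : ∀ x y, x ≠ y → 0 < Γ x y)
    (hblow : ∀ y, Tendsto (fun x => Γ x y) (𝓝[≠] y) atTop)
    (hdecay : ∀ K : Set (EuclideanSpace ℝ (Fin n)), IsCompact K →
      Tendsto (fun x => ⨆ y : K, Γ x (y : EuclideanSpace ℝ (Fin n)))
        (Filter.cocompact _) (𝓝 0))
    (hloc : ∀ x, LocallyIntegrable (Γ x) volume)
    (α : ℝ) (hα : -1 < α)
    (hQ : ∀ (x : EuclideanSpace ℝ (Fin n)) (r : ℝ), 0 < r → 0 < Qr Γ α x r)
    (hrep : ∀ u : EuclideanSpace ℝ (Fin n) → ℝ, ContDiff ℝ 2 u →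
      ∀ (x : EuclideanSpace ℝ (Fin n)) (r : ℝ), 0 < r →
        u x = Mr Γ A α u x r - Nr Γ α (Lop A u) x r)
    (u : EuclideanSpace ℝ (Fin n) → ℝ) (hu : ContDiff ℝ 2 u)
    (x : EuclideanSpace ℝ (Fin n)) :
    Tendsto (fun r : ℝ => (Mr Γ A α u x r - u x) / Qr Γ α x r)
      (𝓝[>] 0) (𝓝 (Lop A u x)) := by
  rcases Nat.eq_zero_or_pos n with hn | hn
  · -- degenerate case `n = 0`: `Lop A u = 0` and the quotient is eventually `0`.
    subst hn
    have hx0 : Lop A u x = 0 := by simp [Lop]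
    rw [hx0]
    apply Tendsto.congr' _ tendsto_const_nhds
    filter_upwards [self_mem_nhdsWithin] with r hr
    have hr0 : (0:ℝ) < r := hr
    have h1 := hrep u hu x r hr0
    have h2 : Nr Γ α (Lop A u) x r = 0 := by
      have hz : Lop A u = fun _ => (0:ℝ) := by funext z; simp [Lop]
      simp [Nr, hz]
    rw [eq_comm]
    rw [h1, h2]
    ring
  -- main case `n ≥ 1`
  haveI : Nonempty (Fin n) := ⟨⟨0, hn⟩⟩
  haveI : Nontrivial (EuclideanSpace ℝ (Fin n)) :=
    inferInstance
  haveI : NullSingletonClass (volume : Measure (EuclideanSpace ℝ (Fin n))) := inferInstance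
  set f : EuclideanSpace ℝ (Fin n) → ℝ := Lop A u with hfdef
  have hfc : Continuous f := lop_continuous A hAsmooth u hu
  have hae_ne : ∀ᵐ y : EuclideanSpace ℝ (Fin n), y ≠ x := by
    refine ae_iff.2 ?_
    simpa using measure_singleton x
  have hΓcont : ContinuousOn (Γ x) {y | y ≠ x} := gamma_contOn Γ hΓsmooth x
  have hΓaesm : AEStronglyMeasurable (Γ x)
      (volume : Measure (EuclideanSpace ℝ (Fin n))) := by
    have h1 : AEStronglyMeasurable (Γ x) (volume.restrict ({x}ᶜ)) :=
      ContinuousOn.aestronglyMeasurable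
        (by rw [Set.compl_singleton_eq]; exact hΓcont) (measurableSet_singleton x).compl
    rwa [restrict_compl_singleton] at h1
  rw [Metric.tendsto_nhdsWithin_nhds]
  intro ε hε
  set ε' := ε / 2 with hε'def
  have hε' : 0 < ε' := half_pos hε
  obtain ⟨δ, hδ, hδf⟩ := Metric.continuousAt_iff.1 hfc.continuousAt ε' hε'
  obtain ⟨M, hM⟩ := gamma_bound Γ hΓsmooth hsymm hdecay x δ hδ
  set M' := max M 0 with hM'def
  have hM'pos : 0 < M' + 1 := by positivity
  set r₀ := 1 / (M' + 1) with hr₀def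
  have hr₀ : 0 < r₀ := by positivity
  refine ⟨r₀, hr₀, ?_⟩
  intro r hrI hrd
  have hr0 : (0:ℝ) < r := hrI
  have hrr₀ : r < r₀ := by
    rwa [Real.dist_eq, sub_zero, abs_of_pos hr0] at hrd
  set B := ball x δ with hBdef
  have hBmeas : MeasurableSet B := measurableSet_ball
  have hΓB : IntegrableOn (Γ x) B := by
    exact ((hloc x).integrableOn_isCompact (isCompact_closedBall x δ)).mono_set
      ball_subset_closedBall
  set C_f := |f x| + ε' with hCfdef
  have hfB : ∀ y ∈ B, |f y| ≤ C_f := by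
    intro y hy
    have h1 := hδf (mem_ball.1 hy)
    rw [Real.dist_eq] at h1
    have := abs_sub_abs_le_abs_sub (f y) (f x)
    rw [hCfdef]
    linarith
  -- the L-balls of radius `≤ r` are contained in `B`
  have hΩsub : ∀ ρ : ℝ, 0 < ρ → ρ ≤ r → LBall Γ x ρ ⊆ B := by
    intro ρ hρ hρr y hy
    rcases hy with ⟨hyx, hΓy⟩ | hy
    · by_contra hyB
      have h1 := hM y hyB
      have h2 : 1 / r₀ < 1 / ρ := by
        apply one_div_lt_one_div_of_lt hρ
        exact lt_of_le_of_lt hρr hrr₀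
      rw [hr₀def, one_div_one_div] at h2
      have h3 : M ≤ M' := le_max_left _ _
      linarith
    · rw [Set.mem_singleton_iff] at hy
      rw [hy]
      exact mem_ball_self hδ
  -- measurability of the L-balls
  have hΩmeas : ∀ ρ : ℝ, MeasurableSet (LBall Γ x ρ) := by
    intro ρ
    have h1 : LBall Γ x ρ = ({x}ᶜ ∩ Γ x ⁻¹' Set.Ioi (1/ρ)) ∪ {x} := by
      ext y
      simp only [LBall, Set.mem_union, Set.mem_setOf_eq, Set.mem_inter_iff,
        Set.mem_compl_iff, Set.mem_singleton_iff, Set.mem_preimage, Set.mem_Ioi]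
    rw [h1]
    apply MeasurableSet.union _ (measurableSet_singleton x)
    apply IsOpen.measurableSet
    have := hΓcont.isOpen_inter_preimage (isOpen_compl_singleton (x := x))
      (isOpen_Ioi (a := 1/ρ))
    rwa [Set.compl_singleton_eq]
  -- integrability of the truncated kernels on `B`
  have hmax_aesm : ∀ c : ℝ, AEStronglyMeasurable
      (fun y => max (Γ x y - c) 0) (volume.restrict B) := by
    intro c
    exact (((hΓaesm.aemeasurable.sub aemeasurable_const).max
      aemeasurable_const).aestronglyMeasurable).restrict
  have hmax_int : ∀ ρ : ℝ, 0 < ρ →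
      IntegrableOn (fun y => max (Γ x y - 1/ρ) 0) B := by
    intro ρ hρ
    apply Integrable.mono' hΓB.norm (hmax_aesm (1/ρ))
    apply Eventually.of_forall
    intro y
    have h1 : (0:ℝ) ≤ 1/ρ := by positivity
    rw [Real.norm_eq_abs, abs_of_nonneg (le_max_right _ _)]
    calc max (Γ x y - 1/ρ) 0 ≤ max (Γ x y) 0 :=
          max_le_max (by linarith) le_rfl
    _ ≤ |Γ x y| := by
          apply max_le (le_abs_self _) (abs_nonneg _)
    _ ≤ ‖Γ x y‖ := le_rfl
  have hmaxf_int : ∀ ρ : ℝ, 0 < ρ →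
      IntegrableOn (fun y => max (Γ x y - 1/ρ) 0 * f y) B := by
    intro ρ hρ
    apply Integrable.mono' ((hmax_int ρ hρ).mul_const C_f)
      ((hmax_aesm (1/ρ)).mul (hfc.aestronglyMeasurable.restrict))
    filter_upwards [ae_restrict_mem hBmeas] with y hy
    show ‖max (Γ x y - 1/ρ) 0 * f y‖ ≤ max (Γ x y - 1/ρ) 0 * C_f
    rw [Real.norm_eq_abs, abs_mul, abs_of_nonneg (le_max_right (Γ x y - 1/ρ) 0)]
    exact mul_le_mul_of_nonneg_left (hfB y hy) (le_max_right _ _)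
  -- the two averaged integrands, rewritten over the fixed ball `B`
  have hIJ : ∀ w : EuclideanSpace ℝ (Fin n) → ℝ, ∀ ρ : ℝ, 0 < ρ → ρ ≤ r →
      (∫ y in LBall Γ x ρ, (Γ x y - 1/ρ) * w y)
        = ∫ y in B, max (Γ x y - 1/ρ) 0 * w y := by
    intro w ρ hρ hρr
    have step1 : (∫ y in LBall Γ x ρ, (Γ x y - 1/ρ) * w y)
        = ∫ y in LBall Γ x ρ, max (Γ x y - 1/ρ) 0 * w y := by
      apply setIntegral_congr_ae (hΩmeas ρ)
      filter_upwards [hae_ne] with y hy hyΩ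
      rcases hyΩ with ⟨_, hΓy⟩ | hyx
      · rw [max_eq_left (by linarith)]
      · exact absurd hyx hy
    have step2 : (∫ y in B, max (Γ x y - 1/ρ) 0 * w y)
        = ∫ y in LBall Γ x ρ, max (Γ x y - 1/ρ) 0 * w y := by
      apply setIntegral_eq_of_subset_of_forall_diff_eq_zero hBmeas (hΩsub ρ hρ hρr)
      intro y hy
      have h1 : y ≠ x := by
        intro h
        exact hy.2 (Or.inr (by simp [h]))
      have h2 : ¬ (1/ρ < Γ x y) := by
        intro h
        exact hy.2 (Or.inl ⟨h1, h⟩)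
      rw [max_eq_right (by push_neg at h2; linarith), zero_mul]
    rw [step1, step2]
  -- named integrands over the fixed ball
  set φ : ℝ → ℝ := fun ρ => ∫ y in B, max (Γ x y - 1/ρ) 0 * f y with hφdef
  set ψ : ℝ → ℝ := fun ρ => ∫ y in B, max (Γ x y - 1/ρ) 0 with hψdef
  have hψ_nonneg : ∀ ρ : ℝ, 0 ≤ ψ ρ := fun ρ =>
    setIntegral_nonneg hBmeas fun y _ => le_max_right _ _
  -- continuity in ρ
  have hmaxΓbd : ∀ ρ : ℝ, 0 < ρ → ∀ y, max (Γ x y - 1/ρ) 0 ≤ ‖Γ x y‖ := by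
    intro ρ hρ y
    have h1 : (0:ℝ) ≤ 1/ρ := by positivity
    calc max (Γ x y - 1/ρ) 0 ≤ max (Γ x y) 0 := max_le_max (by linarith) le_rfl
    _ ≤ |Γ x y| := max_le (le_abs_self _) (abs_nonneg _)
  have hinvcont : ∀ y : EuclideanSpace ℝ (Fin n),
      ContinuousOn (fun ρ : ℝ => max (Γ x y - 1/ρ) 0) (Set.Ioi 0) := by
    intro y
    have h1 : ContinuousOn (fun ρ : ℝ => Γ x y - 1/ρ) (Set.Ioi 0) :=
      continuousOn_const.sub
        (continuousOn_const.div continuousOn_id fun ρ hρ => ne_of_gt hρ)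
    exact h1.sup continuousOn_const
  have hφcont : ContinuousOn φ (Set.Ioi (0:ℝ)) := by
    rw [hφdef]
    apply continuousOn_of_dominated (bound := fun y => ‖Γ x y‖ * C_f)
    · intro ρ _
      exact (hmax_aesm (1/ρ)).mul (hfc.aestronglyMeasurable.restrict)
    · intro ρ hρ
      have hρ' : (0:ℝ) < ρ := hρ
      filter_upwards [ae_restrict_mem hBmeas] with y hy
      show ‖max (Γ x y - 1/ρ) 0 * f y‖ ≤ ‖Γ x y‖ * C_f
      rw [Real.norm_eq_abs, abs_mul, abs_of_nonneg (le_max_right (Γ x y - 1/ρ) 0)]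
      exact mul_le_mul (hmaxΓbd ρ hρ' y) (hfB y hy) (abs_nonneg _) (norm_nonneg _)
    · exact hΓB.norm.mul_const C_f
    · exact Eventually.of_forall fun y => (hinvcont y).mul continuousOn_const
  have hψcont : ContinuousOn ψ (Set.Ioi (0:ℝ)) := by
    rw [hψdef]
    apply continuousOn_of_dominated (bound := fun y => ‖Γ x y‖)
    · intro ρ _
      exact hmax_aesm (1/ρ)
    · intro ρ hρ
      have hρ' : (0:ℝ) < ρ := hρ
      apply Eventually.of_forall
      intro y
      rw [Real.norm_eq_abs, abs_of_nonneg (le_max_right (Γ x y - 1/ρ) 0)]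
      exact hmaxΓbd ρ hρ' y
    · exact hΓB.norm
    · exact Eventually.of_forall fun y => hinvcont y
  have hrpowcont : ContinuousOn (fun ρ : ℝ => ρ ^ α) (Set.Ioi (0:ℝ)) := fun ρ hρ =>
    (Real.continuousAt_rpow_const ρ α (Or.inl (ne_of_gt hρ))).continuousWithinAt
  -- the interval integrands
  set gg : ℝ → ℝ := fun ρ => ρ ^ α * ∫ y in LBall Γ x ρ, (Γ x y - 1 / ρ) * (1:ℝ)
    with hggdef
  set hh : ℝ → ℝ := fun ρ => ρ ^ α * ∫ y in LBall Γ x ρ, (Γ x y - 1 / ρ) * f y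
    with hhhdef
  have hQr_eq : Qr Γ α x r = ((α + 1) / r ^ (α + 1)) * ∫ ρ in (0:ℝ)..r, gg ρ := rfl
  have hNr_eq : Nr Γ α f x r = ((α + 1) / r ^ (α + 1)) * ∫ ρ in (0:ℝ)..r, hh ρ := rfl
  have hg_eq : ∀ ρ ∈ Set.Ioc (0:ℝ) r, gg ρ = ρ ^ α * ψ ρ := by
    intro ρ hρ
    have h1 := hIJ (fun _ => (1:ℝ)) ρ hρ.1 hρ.2
    simp only [mul_one] at h1
    simp only [hggdef, hψdef, mul_one]
    rw [h1]
  have hh_eq : ∀ ρ ∈ Set.Ioc (0:ℝ) r, hh ρ = ρ ^ α * φ ρ := by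
    intro ρ hρ
    have h1 := hIJ f ρ hρ.1 hρ.2
    simp only [hhhdef, hφdef]
    rw [h1]
  have hQpos : 0 < Qr Γ α x r := hQ x r hr0
  have hc : 0 < (α + 1) / r ^ (α + 1) :=
    div_pos (by linarith) (Real.rpow_pos_of_pos hr0 _)
  have hgInt : IntervalIntegrable gg volume 0 r := by
    by_contra hcon
    have h0 : ∫ ρ in (0:ℝ)..r, gg ρ = 0 := by
      rw [intervalIntegral.integral_of_le hr0.le]
      apply integral_undef
      rwa [intervalIntegrable_iff_integrableOn_Ioc_of_le hr0.le] at hcon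
    rw [hQr_eq, h0, mul_zero] at hQpos
    exact lt_irrefl _ hQpos
  have hintgg : 0 < ∫ ρ in (0:ℝ)..r, gg ρ := by
    have h1 := hQpos
    rw [hQr_eq] at h1
    nlinarith
  -- pointwise bounds on φ
  have hφbound : ∀ ρ : ℝ, 0 < ρ → |φ ρ - f x * ψ ρ| ≤ ε' * ψ ρ := by
    intro ρ hρ
    have e1 : φ ρ - f x * ψ ρ = ∫ y in B, max (Γ x y - 1/ρ) 0 * (f y - f x) := by
      have e2 : (∫ y in B, max (Γ x y - 1/ρ) 0 * (f y - f x))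
          = (∫ y in B, (max (Γ x y - 1/ρ) 0 * f y - max (Γ x y - 1/ρ) 0 * f x)) := by
        apply integral_congr_ae
        apply Eventually.of_forall
        intro y
        ring
      rw [e2, integral_sub (hmaxf_int ρ hρ) ((hmax_int ρ hρ).mul_const (f x)),
        integral_mul_const]
      simp only [hφdef, hψdef]
      ring
    rw [e1]
    have e3 : ‖∫ y in B, max (Γ x y - 1/ρ) 0 * (f y - f x)‖
        ≤ ∫ y in B, max (Γ x y - 1/ρ) 0 * ε' := by
      apply norm_integral_le_of_norm_le ((hmax_int ρ hρ).mul_const ε')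
      filter_upwards [ae_restrict_mem hBmeas] with y hy
      rw [Real.norm_eq_abs, abs_mul, abs_of_nonneg (le_max_right (Γ x y - 1/ρ) 0)]
      apply mul_le_mul_of_nonneg_left _ (le_max_right _ _)
      have h4 := hδf (mem_ball.1 hy)
      rw [Real.dist_eq] at h4
      exact h4.le
    rw [integral_mul_const] at e3
    calc |∫ y in B, max (Γ x y - 1/ρ) 0 * (f y - f x)| ≤ ψ ρ * ε' := e3
    _ = ε' * ψ ρ := mul_comm _ _
  have hφabs : ∀ ρ : ℝ, 0 < ρ → |φ ρ| ≤ C_f * ψ ρ := by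
    intro ρ hρ
    have e3 : ‖∫ y in B, max (Γ x y - 1/ρ) 0 * f y‖
        ≤ ∫ y in B, max (Γ x y - 1/ρ) 0 * C_f := by
      apply norm_integral_le_of_norm_le ((hmax_int ρ hρ).mul_const C_f)
      filter_upwards [ae_restrict_mem hBmeas] with y hy
      rw [Real.norm_eq_abs, abs_mul, abs_of_nonneg (le_max_right (Γ x y - 1/ρ) 0)]
      exact mul_le_mul_of_nonneg_left (hfB y hy) (le_max_right _ _)
    rw [integral_mul_const] at e3
    calc |φ ρ| ≤ ψ ρ * C_f := e3
    _ = C_f * ψ ρ := mul_comm _ _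
  -- integrability of hh
  have hggInt' : IntegrableOn gg (Set.Ioc (0:ℝ) r) := by
    rwa [intervalIntegrable_iff_integrableOn_Ioc_of_le hr0.le] at hgInt
  have hhInt : IntervalIntegrable hh volume 0 r := by
    rw [intervalIntegrable_iff_integrableOn_Ioc_of_le hr0.le]
    apply Integrable.mono' (hggInt'.const_mul C_f)
    · apply AEStronglyMeasurable.congr
        (((hrpowcont.mul hφcont).mono Set.Ioc_subset_Ioi_self).aestronglyMeasurable
          measurableSet_Ioc)
      filter_upwards [ae_restrict_mem measurableSet_Ioc] with ρ hρ
      exact (hh_eq ρ hρ).symm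
    · filter_upwards [ae_restrict_mem measurableSet_Ioc] with ρ hρ
      rw [Real.norm_eq_abs, hh_eq ρ hρ, hg_eq ρ hρ, abs_mul,
        abs_of_nonneg (Real.rpow_nonneg hρ.1.le α)]
      calc ρ ^ α * |φ ρ| ≤ ρ ^ α * (C_f * ψ ρ) :=
            mul_le_mul_of_nonneg_left (hφabs ρ hρ.1) (Real.rpow_nonneg hρ.1.le α)
      _ = C_f * (ρ ^ α * ψ ρ) := by ring
  -- the key estimate
  have hdiff : Nr Γ α f x r - f x * Qr Γ α x r
      = ((α + 1) / r ^ (α + 1)) * ∫ ρ in (0:ℝ)..r, (hh ρ - f x * gg ρ) := by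
    rw [intervalIntegral.integral_sub hhInt (hgInt.const_mul (f x)),
      intervalIntegral.integral_const_mul, hNr_eq, hQr_eq]
    ring
  have hbd : ‖∫ ρ in (0:ℝ)..r, (hh ρ - f x * gg ρ)‖
      ≤ |∫ ρ in (0:ℝ)..r, ε' * gg ρ| := by
    apply intervalIntegral.norm_integral_le_abs_of_norm_le _ (hgInt.const_mul ε')
    rw [Set.uIoc_of_le hr0.le]
    filter_upwards [ae_restrict_mem measurableSet_Ioc] with ρ hρ
    rw [Real.norm_eq_abs, hh_eq ρ hρ, hg_eq ρ hρ]
    have e4 : ρ ^ α * φ ρ - f x * (ρ ^ α * ψ ρ) = ρ ^ α * (φ ρ - f x * ψ ρ) := by ring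
    rw [e4, abs_mul, abs_of_nonneg (Real.rpow_nonneg hρ.1.le α)]
    calc ρ ^ α * |φ ρ - f x * ψ ρ| ≤ ρ ^ α * (ε' * ψ ρ) :=
          mul_le_mul_of_nonneg_left (hφbound ρ hρ.1) (Real.rpow_nonneg hρ.1.le α)
    _ = ε' * (ρ ^ α * ψ ρ) := by ring
  have hbd2 : |∫ ρ in (0:ℝ)..r, ε' * gg ρ| = ε' * ∫ ρ in (0:ℝ)..r, gg ρ := by
    rw [intervalIntegral.integral_const_mul, abs_of_pos (mul_pos hε' hintgg)]
  have hkey : |Nr Γ α f x r - f x * Qr Γ α x r| ≤ ε' * Qr Γ α x r := by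
    rw [hdiff, abs_mul, abs_of_pos hc]
    calc ((α + 1) / r ^ (α + 1)) * |∫ ρ in (0:ℝ)..r, (hh ρ - f x * gg ρ)|
        ≤ ((α + 1) / r ^ (α + 1)) * (ε' * ∫ ρ in (0:ℝ)..r, gg ρ) := by
          apply mul_le_mul_of_nonneg_left _ hc.le
          rw [← hbd2]
          exact hbd
    _ = ε' * Qr Γ α x r := by rw [hQr_eq]; ring
  -- conclusion
  have hMr : Mr Γ A α u x r - u x = Nr Γ α f x r := by
    have h5 := hrep u hu x r hr0
    linarith
  rw [hMr, Real.dist_eq]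
  have hQne : Qr Γ α x r ≠ 0 := ne_of_gt hQpos
  have e5 : Nr Γ α f x r / Qr Γ α x r - f x
      = (Nr Γ α f x r - f x * Qr Γ α x r) / Qr Γ α x r := by
    field_simp
  rw [e5, abs_div, abs_of_pos hQpos]
  have e6 : |Nr Γ α f x r - f x * Qr Γ α x r| / Qr Γ α x r
      ≤ (ε' * Qr Γ α x r) / Qr Γ α x r := by gcongr
  rw [mul_div_assoc, div_self hQne, mul_one] at e6
  calc |Nr Γ α f x r - f x * Qr Γ α x r| / Qr Γ α x r ≤ ε' := e6
  _ < ε := by rw [hε'def]; linarith
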